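/- arXiv:0905.2639 — 5 statements merged into one kernel-verified Lean document; each statement's English description precedes it below -/
import Mathlib

section
/- Let p ≥ 2 and d ≥ 1 be integers with d ≤ (p−1)/2. Then the number |G_{p,d}| of undirected graphs on p labeled vertices with maximum vertex degree at most d satisfies (⌊p/(d+1)⌋!)^{d(d+1)/2} ≤ |G_{p,d}| ≤ (pd/2) · C(C(p,2), ⌊pd/2⌋), where C(N, ℓ) denotes the binomial coefficient. -/
/-!
Upper bound: a graph of maximum degree at most `d` has at most `m = ⌊pd/2⌋` edges, so it is
determined by a set of at most `m` of the `N = C(p,2)` possible edges. Since `2m ≤ N`, the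
coefficients `C(N,k)` increase up to `k = m`, and `C(N,0) + C(N,1) ≤ C(N,2)` once `m ≥ 2`, so
`∑_{k ≤ m} C(N,k) ≤ m · C(N,m)`.

Lower bound: take `d + 1` disjoint blocks of `⌊p/(d+1)⌋` vertices and join every pair of blocks
by the perfect matching of a chosen permutation. Each vertex then has at most one neighbour in
every other block, hence degree at most `d`, and distinct choices of the `C(d+1,2)` permutations
give distinct graphs.
-/

open scoped Classical BigOperators
open Real

noncomputable section

/-- Sign of a Boolean spin: `true ↦ 1`, `false ↦ -1`. -/
def sgn (b : Bool) : ℝ := if b then 1 else -1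

/-- Ising energy `Σ_{s<t} θ_{st} x_s x_t`. -/
def energy {p : ℕ} (θ : Fin p → Fin p → ℝ) (x : Fin p → Bool) : ℝ :=
  ∑ s : Fin p, ∑ t : Fin p, if s < t then θ s t * sgn (x s) * sgn (x t) else 0

/-- Partition function `Z(θ)`. -/
def Zpart {p : ℕ} (θ : Fin p → Fin p → ℝ) : ℝ :=
  ∑ x : Fin p → Bool, Real.exp (energy θ x)

/-- Ising probability mass function `P_θ`. -/
def isingP {p : ℕ} (θ : Fin p → Fin p → ℝ) (x : Fin p → Bool) : ℝ :=
  Real.exp (energy θ x) / Zpart θ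

/-- Probability of an event under `n` i.i.d. samples from `P_θ`. -/
def probn {p : ℕ} (n : ℕ) (θ : Fin p → Fin p → ℝ)
    (A : (Fin n → Fin p → Bool) → Prop) : ℝ :=
  ∑ xs : Fin n → Fin p → Bool, if A xs then ∏ i, isingP θ (xs i) else 0

/-- Probability of a single-sample event under `P_θ`. -/
def prob1 {p : ℕ} (θ : Fin p → Fin p → ℝ) (A : (Fin p → Bool) → Prop) : ℝ :=
  ∑ x : Fin p → Bool, if A x then isingP θ x else 0

/-- A parameter vector: symmetric array vanishing on the diagonal. -/
def IsSymParam {p : ℕ} (θ : Fin p → Fin p → ℝ) : Prop :=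
  (∀ s t, θ s t = θ t s) ∧ (∀ s, θ s s = 0)

/-- The class `Θ_{λ,ω}(G)` of admissible parameter vectors for graph `G`. -/
def ParamClass {p : ℕ} (G : SimpleGraph (Fin p)) (lam om : ℝ)
    (θ : Fin p → Fin p → ℝ) : Prop :=
  IsSymParam θ ∧ (∀ s t : Fin p, ¬ G.Adj s t → θ s t = 0) ∧
    (∀ s t : Fin p, G.Adj s t → lam ≤ |θ s t|) ∧
    (∀ s : Fin p, (∑ t : Fin p, |θ s t|) ≤ om)

/-- The class `G_{p,d}` of graphs with maximum degree at most `d`. -/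
def degClass (p d : ℕ) : Set (SimpleGraph (Fin p)) :=
  {G | ∀ v : Fin p, ({u | G.Adj v u}).ncard ≤ d}

/-- The class `G_{p,k}` of graphs with at most `k` edges. -/
def edgeClass (p k : ℕ) : Set (SimpleGraph (Fin p)) :=
  {G | G.edgeSet.ncard ≤ k}

/-- Kullback–Leibler divergence `D(θ‖θ')` between Ising models. -/
def KLdiv {p : ℕ} (θ θ' : Fin p → Fin p → ℝ) : ℝ :=
  ∑ x : Fin p → Bool, isingP θ x * Real.log (isingP θ x / isingP θ' x)

/-- Symmetrized KL divergence `S(θ‖θ')`. -/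
def symKL {p : ℕ} (θ θ' : Fin p → Fin p → ℝ) : ℝ := KLdiv θ θ' + KLdiv θ' θ

/-- The divergence `J(θ‖θ') = D((θ+θ')/2‖θ) + D((θ+θ')/2‖θ')`. -/
def Jdiv {p : ℕ} (θ θ' : Fin p → Fin p → ℝ) : ℝ :=
  KLdiv (fun s t => (θ s t + θ' s t) / 2) θ +
    KLdiv (fun s t => (θ s t + θ' s t) / 2) θ'

/-- Mean parameter `μ_{st}(θ) = E_θ[X_s X_t]`. -/
def meanPar {p : ℕ} (θ : Fin p → Fin p → ℝ) (s t : Fin p) : ℝ :=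
  ∑ x : Fin p → Bool, isingP θ x * (sgn (x s) * sgn (x t))

open Finset
open scoped Nat

namespace SimpleGraph

variable {V W : Type*}

lemma ncard_neighborSet_eq_degree [Fintype V] (G : SimpleGraph V) [DecidableRel G.Adj]
    (v : V) : (G.neighborSet v).ncard = G.degree v := by
  rw [← Nat.card_coe_set_eq, Nat.card_eq_fintype_card, card_neighborSet_eq_degree]

lemma two_mul_card_edgeFinset_le [Fintype V] (G : SimpleGraph V) [DecidableRel G.Adj] {d : ℕ}
    (h : ∀ v, G.degree v ≤ d) : 2 * #G.edgeFinset ≤ Fintype.card V * d := by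
  rw [← sum_degrees_eq_twice_card_edges, ← smul_eq_mul, ← Finset.card_univ]
  exact Finset.sum_le_card_nsmul _ _ _ fun v _ => h v

lemma ncard_neighborSet_map_le (f : V ↪ W) (G : SimpleGraph V) {d : ℕ}
    (h : ∀ v, (G.neighborSet v).ncard ≤ d) (w : W) : ((G.map f).neighborSet w).ncard ≤ d := by
  by_cases hw : w ∈ Set.range f
  · obtain ⟨v, rfl⟩ := hw
    rw [neighborSet_map, Set.ncard_image_of_injective _ f.injective]
    exact h v
  · have : (G.map f).neighborSet w = ∅ := by
      ext u
      simp only [mem_neighborSet, map_adj, Set.mem_empty_iff_false, iff_false]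
      rintro ⟨v, -, -, rfl, -⟩
      exact hw ⟨v, rfl⟩
    simp [this]

end SimpleGraph

section BlockMatching

variable {ι α : Type*} [LinearOrder ι]

def blockMatchingGraph (σ : {x : ι × ι // x.1 < x.2} → Equiv.Perm α) : SimpleGraph (ι × α) :=
  SimpleGraph.fromRel fun a b => ∃ h : a.1 < b.1, σ ⟨(a.1, b.1), h⟩ a.2 = b.2

lemma injOn_fst_neighborSet_blockMatchingGraph (σ : {x : ι × ι // x.1 < x.2} → Equiv.Perm α)
    (a : ι × α) : Set.InjOn Prod.fst ((blockMatchingGraph σ).neighborSet a) := by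
  rintro ⟨j, l⟩ ⟨-, ⟨h, hl⟩ | ⟨h, hl⟩⟩ ⟨j', l'⟩ ⟨-, ⟨h', hl'⟩ | ⟨h', hl'⟩⟩ (rfl : j = j')
  · exact Prod.ext rfl (hl.symm.trans hl')
  · exact absurd h (lt_asymm h')
  · exact absurd h (lt_asymm h')
  · exact Prod.ext rfl ((σ _).injective (hl.trans hl'.symm))

lemma ncard_neighborSet_blockMatchingGraph_le [Fintype ι]
    (σ : {x : ι × ι // x.1 < x.2} → Equiv.Perm α) (a : ι × α) :
    ((blockMatchingGraph σ).neighborSet a).ncard ≤ Fintype.card ι - 1 := by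
  calc ((blockMatchingGraph σ).neighborSet a).ncard
      ≤ ({a.1}ᶜ : Set ι).ncard := by
        refine Set.ncard_le_ncard_of_injOn Prod.fst ?_
          (injOn_fst_neighborSet_blockMatchingGraph σ a)
        rintro b ⟨-, hb | hb⟩ <;> obtain ⟨h, -⟩ := hb
        exacts [h.ne', h.ne]
    _ = Fintype.card ι - 1 := by
        rw [Set.ncard_compl, Set.ncard_singleton, Nat.card_eq_fintype_card]

lemma blockMatchingGraph_injective :
    Function.Injective (blockMatchingGraph : ({x : ι × ι // x.1 < x.2} → Equiv.Perm α) → _) := by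
  intro σ τ hστ
  funext x
  ext k
  have hadj : (blockMatchingGraph τ).Adj (x.1.1, k) (x.1.2, σ x k) :=
    hστ ▸ ⟨fun h => x.2.ne (congrArg Prod.fst h), Or.inl ⟨x.2, rfl⟩⟩
  obtain ⟨-, ⟨_, h⟩ | ⟨hlt, -⟩⟩ := hadj
  · exact h.symm
  · exact absurd hlt (lt_asymm x.2)

end BlockMatching

theorem factorial_pow_choose_two_le_ncard_degClass {p q m : ℕ} (h : q * m ≤ p) :
    m ! ^ q.choose 2 ≤ (degClass p (q - 1)).ncard := by
  let e : Fin q × Fin m ↪ Fin p := finProdFinEquiv.toEmbedding.trans (Fin.castLEEmb h)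
  have hmem (σ : {x : Fin q × Fin q // x.1 < x.2} → Equiv.Perm (Fin m)) :
      (blockMatchingGraph σ).map e ∈ degClass p (q - 1) :=
    SimpleGraph.ncard_neighborSet_map_le e _ fun a => by
      simpa using ncard_neighborSet_blockMatchingGraph_le σ a
  calc m ! ^ q.choose 2 = Nat.card ({x : Fin q × Fin q // x.1 < x.2} → Equiv.Perm (Fin m)) := by
        rw [Nat.card_fun, Nat.card_perm, Nat.card_eq_fintype_card, Nat.card_eq_fintype_card,
          Fintype.card_subtype, Fintype.card_product_filter_lt, Fintype.card_fin,
          Fintype.card_fin]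
    _ ≤ Nat.card (degClass p (q - 1)) :=
        Nat.card_le_card_of_injective (fun σ => ⟨_, hmem σ⟩) fun σ τ hστ =>
          blockMatchingGraph_injective (SimpleGraph.map_injective e (congrArg Subtype.val hστ))
    _ = (degClass p (q - 1)).ncard := Nat.card_coe_set_eq _

theorem ncard_degClass_le_sum_choose (p d : ℕ) :
    (degClass p d).ncard ≤ ∑ k ∈ range (p * d / 2 + 1), (p.choose 2).choose k := by
  set E := (⊤ : SimpleGraph (Fin p)).edgeFinset
  have hE : #E = p.choose 2 := by
    rw [SimpleGraph.card_edgeFinset_top_eq_card_choose_two, Fintype.card_fin]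
  calc (degClass p d).ncard
      ≤ #((range (p * d / 2 + 1)).biUnion fun k => E.powersetCard k) := by
        rw [← Set.ncard_coe_finset]
        refine Set.ncard_le_ncard_of_injOn (fun G => G.edgeFinset) (fun G hG => ?_)
          (fun G _ H _ hGH => SimpleGraph.edgeFinset_inj.mp hGH)
        have hcard := G.two_mul_card_edgeFinset_le fun v =>
          G.ncard_neighborSet_eq_degree v ▸ hG v
        simp only [coe_biUnion, coe_range, Set.mem_Iio, mem_coe, Set.mem_iUnion,
          mem_powersetCard, exists_prop]
        refine ⟨_, ?_, SimpleGraph.edgeFinset_mono le_top, rfl⟩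
        rw [Fintype.card_fin] at hcard
        omega
    _ ≤ ∑ k ∈ range (p * d / 2 + 1), #(E.powersetCard k) := card_biUnion_le
    _ = ∑ k ∈ range (p * d / 2 + 1), (p.choose 2).choose k := by
        simp only [card_powersetCard, hE]

namespace Nat

lemma choose_le_choose_of_le_half_left {n a b : ℕ} (hab : a ≤ b) (hb : b ≤ n / 2) :
    n.choose a ≤ n.choose b := by
  induction b, hab using Nat.le_induction with
  | base => rfl
  | succ b _ ih => exact (ih (by omega)).trans (choose_le_succ_of_lt_half_left (by omega))

lemma succ_le_choose_two {n : ℕ} (hn : 4 ≤ n) : n + 1 ≤ n.choose 2 := by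
  obtain ⟨n, rfl⟩ := Nat.exists_eq_add_of_le' hn
  rw [choose_two_right, Nat.le_div_iff_mul_le two_pos, show n + 4 - 1 = n + 3 by omega]
  nlinarith

lemma sum_range_choose_le_mul_choose {n m : ℕ} (hm : 2 ≤ m) (hmn : m ≤ n / 2) :
    ∑ k ∈ range (m + 1), n.choose k ≤ m * n.choose m := by
  obtain ⟨m, rfl⟩ := Nat.exists_eq_add_of_le' hm
  have hhead : n.choose 1 + n.choose 0 ≤ n.choose (m + 2) := by
    rw [choose_one_right, choose_zero_right]
    exact (succ_le_choose_two (by omega)).trans (choose_le_choose_of_le_half_left (by omega) hmn)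
  have htail : ∑ k ∈ range (m + 1), n.choose (k + 1 + 1) ≤ (m + 1) * n.choose (m + 2) := by
    simpa using sum_le_card_nsmul (range (m + 1)) _ _ fun k hk =>
      choose_le_choose_of_le_half_left (by rw [mem_range] at hk; omega) hmn
  rw [sum_range_succ', sum_range_succ']
  linarith

end Nat

lemma sum_range_choose_le_half_mul_choose {p d : ℕ} (hd : 1 ≤ d) (hdp : 2 * d ≤ p - 1) :
    ((∑ k ∈ range (p * d / 2 + 1), (p.choose 2).choose k : ℕ) : ℝ) ≤
      p * d / 2 * (p.choose 2).choose (p * d / 2) := by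
  have hpd : p * d ≤ p.choose 2 := by
    rw [Nat.choose_two_right, Nat.le_div_iff_mul_le two_pos, mul_assoc, mul_comm d]
    exact Nat.mul_le_mul_left p (by omega)
  by_cases hm : 2 ≤ p * d / 2
  · calc ((∑ k ∈ range (p * d / 2 + 1), (p.choose 2).choose k : ℕ) : ℝ)
        ≤ ((p * d / 2 : ℕ) : ℝ) * (p.choose 2).choose (p * d / 2) := by
          exact_mod_cast Nat.sum_range_choose_le_mul_choose hm (Nat.div_le_div_right hpd)
      _ ≤ p * d / 2 * (p.choose 2).choose (p * d / 2) := by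
          gcongr
          exact_mod_cast Nat.cast_div_le
  · -- `m = 1` forces `p = 3, d = 1`, where the slack `pd/2 = 3/2 > m` absorbs `C(N,0)`.
    obtain ⟨rfl, rfl⟩ : p = 3 ∧ d = 1 := by
      have : p ≤ p * d := Nat.le_mul_of_pos_right p hd
      have : 3 * d ≤ p * d := Nat.mul_le_mul_right d (by omega)
      omega
    norm_num [sum_range_succ, Nat.choose]

theorem card_deg_class_general (p d : ℕ) (hd : 1 ≤ d) (hdp : 2 * d ≤ p - 1) :
    ((Nat.factorial (p / (d + 1)) : ℝ)) ^ (d * (d + 1) / 2) ≤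
        ((degClass p d).ncard : ℝ) ∧
      ((degClass p d).ncard : ℝ) ≤
        (p : ℝ) * (d : ℝ) / 2 * ((p.choose 2).choose (p * d / 2) : ℝ) := by
  constructor
  · have h := factorial_pow_choose_two_le_ncard_degClass (Nat.mul_div_le p (d + 1))
    rw [Nat.add_sub_cancel, Nat.choose_two_right, Nat.add_sub_cancel, mul_comm] at h
    exact_mod_cast h
  · exact (Nat.cast_le.mpr (ncard_degClass_le_sum_choose p d)).trans
      (sum_range_choose_le_half_mul_choose hd hdp)

/-- Lemma (cardinality of `G_{p,d}`): for `d ≤ (p-1)/2`, the number of graphs on `p`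
labeled vertices with maximum degree at most `d` is between
`(⌊p/(d+1)⌋!)^{d(d+1)/2}` and `(pd/2)·C(C(p,2), ⌊pd/2⌋)`. -/
theorem card_deg_class (p d : ℕ) (hp : 2 ≤ p) (hd : 1 ≤ d) (hdp : 2 * d ≤ p - 1) :
    ((Nat.factorial (p / (d + 1)) : ℝ)) ^ (d * (d + 1) / 2) ≤
        ((degClass p d).ncard : ℝ) ∧
      ((degClass p d).ncard : ℝ) ≤
        (p : ℝ) * (d : ℝ) / 2 * ((p.choose 2).choose (p * d / 2) : ℝ) :=
  card_deg_class_general p d hd hdp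
end
end

section
/- Let X be a finite set, let P_1, …, P_M (M ≥ 5) be probability distributions on X, each assigning positive probability to every point, and let n be a positive integer. If n < log(M/4) / ( (2/M²) Σ_{1 ≤ k < ℓ ≤ M} [D(P_k‖P_ℓ) + D(P_ℓ‖P_k)] ), then for every decoder φ : X^n → {1,…,M} there exists an index k ∈ {1,…,M} such that the probability, under n i.i.d. samples X_1,…,X_n from P_k, that φ(X_1,…,X_n) ≠ k is at least 1/2. -/
open scoped Classical BigOperators
open Real

noncomputable section

/-! If every `P_k` were decoded correctly with probability at least `1/2`, compare each product
law `P_kⁿ` with the uniform mixture `P̄` of all the `P_lⁿ`, and put `q_k = P̄(φ = k)`, so that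
`∑ q_k = 1`. Tilting `P̄` by `1/q_k` on the event `{φ = k}` and applying Jensen gives
`D(P_kⁿ‖P̄) ≥ ½ log (1/q_k) - log 2`, while convexity of `D` in its second argument and
tensorisation give `D(P_kⁿ‖P̄) ≤ (n/M) ∑_l D(P_k‖P_l)`. Summing over `k` and using
`∑_k log (1/q_k) ≥ M log M` yields
`log (M/4) ≤ n (2/M²) ∑_{k<l} [D(P_k‖P_l) + D(P_l‖P_k)]`, which the bound on `n` forbids. -/

open Finset

section

variable {ι α : Type*}

def kl [Fintype α] (p q : α → ℝ) : ℝ :=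
  ∑ x, p x * log (p x / q x)

theorem kl_self [Fintype α] (p : α → ℝ) : kl p p = 0 :=
  sum_eq_zero fun x _ => by by_cases h : p x = 0 <;> simp [h]

theorem sum_mul_log_le_log_sum_mul {s : Finset ι} {w y : ι → ℝ} (hw : ∀ i ∈ s, 0 ≤ w i)
    (hw₁ : ∑ i ∈ s, w i = 1) (hy : ∀ i ∈ s, 0 < y i) :
    ∑ i ∈ s, w i * log (y i) ≤ log (∑ i ∈ s, w i * y i) := by
  simpa only [smul_eq_mul] using strictConcaveOn_log_Ioi.concaveOn.le_map_sum hw hw₁ hy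

theorem card_mul_log_card_le_sum_log_inv [Fintype ι] {q : ι → ℝ} (hq : ∀ i, 0 < q i)
    (hq₁ : ∑ i, q i = 1) :
    Fintype.card ι * log (Fintype.card ι) ≤ ∑ i, log (q i)⁻¹ := by
  rcases isEmpty_or_nonempty ι with hι | hι
  · simp
  have hcard : (0 : ℝ) < Fintype.card ι := by exact_mod_cast Fintype.card_pos
  have h := sum_mul_log_le_log_sum_mul (s := univ) (w := fun _ => (Fintype.card ι : ℝ)⁻¹)
    (fun _ _ => by positivity) (by simp [hcard.ne']) (fun i _ => hq i)
  rw [← mul_sum, ← mul_sum, hq₁, mul_one, log_inv] at h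
  have h' := mul_le_mul_of_nonneg_left h hcard.le
  rw [← mul_assoc, mul_inv_cancel₀ hcard.ne', one_mul] at h'
  simp only [log_inv, sum_neg_distrib]
  linarith

theorem kl_mixture_right_le [Fintype α] {s : Finset ι} {w : ι → ℝ} {Q : α → ℝ}
    {R : ι → α → ℝ} (hQ : ∀ x, 0 < Q x) (hw : ∀ i ∈ s, 0 ≤ w i) (hw₁ : ∑ i ∈ s, w i = 1)
    (hR : ∀ i ∈ s, ∀ x, 0 < R i x) :
    kl Q (fun x => ∑ i ∈ s, w i * R i x) ≤ ∑ i ∈ s, w i * kl Q (R i) := by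
  have pointwise : ∀ x,
      log (Q x / ∑ i ∈ s, w i * R i x) ≤ ∑ i ∈ s, w i * log (Q x / R i x) := by
    intro x
    have hmix : 0 < ∑ i ∈ s, w i * R i x := by
      obtain ⟨i, hi, hwi⟩ :=
        exists_lt_of_sum_lt (s := s) (f := fun _ => (0 : ℝ)) (g := w) (by simp [hw₁])
      exact sum_pos' (fun j hj => mul_nonneg (hw j hj) (hR j hj x).le)
        ⟨i, hi, mul_pos hwi (hR i hi x)⟩
    have hJ := sum_mul_log_le_log_sum_mul hw hw₁ (fun i hi => hR i hi x)
    calc log (Q x / ∑ i ∈ s, w i * R i x)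
        = log (Q x) - log (∑ i ∈ s, w i * R i x) := log_div (hQ x).ne' hmix.ne'
      _ ≤ ∑ i ∈ s, w i * log (Q x) - ∑ i ∈ s, w i * log (R i x) := by
        rw [← sum_mul, hw₁, one_mul]; linarith
      _ = ∑ i ∈ s, w i * log (Q x / R i x) := by
        rw [← sum_sub_distrib]
        exact sum_congr rfl fun i hi => by rw [log_div (hQ x).ne' (hR i hi x).ne']; ring
  calc kl Q _ ≤ ∑ x, Q x * ∑ i ∈ s, w i * log (Q x / R i x) :=
        sum_le_sum fun x _ => mul_le_mul_of_nonneg_left (pointwise x) (hQ x).le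
    _ = ∑ i ∈ s, w i * kl Q (R i) := by
        simp only [kl, mul_sum, sum_comm (s := univ)]
        exact sum_congr rfl fun i _ => sum_congr rfl fun x _ => by ring

theorem mul_log_inv_sub_log_two_le_kl [Fintype α] {Q R : α → ℝ} (hQ : ∀ x, 0 < Q x)
    (hQ₁ : ∑ x, Q x = 1) (hR : ∀ x, 0 < R x) (hR₁ : ∑ x, R x = 1) {A : Finset α}
    (hA : 0 < ∑ x ∈ A, R x) :
    (∑ x ∈ A, Q x) * log (∑ x ∈ A, R x)⁻¹ - log 2 ≤ kl Q R := by
  set r := ∑ x ∈ A, R x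
  have hr : r ≤ 1 :=
    hR₁ ▸ sum_le_sum_of_subset_of_nonneg (subset_univ A) fun x _ _ => (hR x).le
  have hcompl : ∑ x ∈ Aᶜ, R x = 1 - r := by rw [← hR₁, ← sum_add_sum_compl A R]; ring
  -- Jensen for `log` with weights `Q` at the points `R c / Q`, where `c = r⁻¹` on `A`, `1` off it
  set c : α → ℝ := fun x => if x ∈ A then r⁻¹ else 1
  have hc : ∀ x, 0 < c x := fun x => by dsimp only [c]; split_ifs <;> positivity
  have hJ := sum_mul_log_le_log_sum_mul (s := univ) (fun x _ => (hQ x).le) hQ₁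
    (fun x _ => div_pos (mul_pos (hR x) (hc x)) (hQ x))
  have hmass : ∑ x, Q x * (R x * c x / Q x) = 2 - r := by
    calc ∑ x, Q x * (R x * c x / Q x) = ∑ x, R x * c x :=
          sum_congr rfl fun x _ => mul_div_cancel₀ _ (hQ x).ne'
      _ = r⁻¹ * r + (1 - r) := by
          rw [← sum_add_sum_compl A, ← hcompl, mul_sum]
          congr 1 <;> refine sum_congr rfl fun x hx => ?_
          · simp [c, hx, mul_comm]
          · simp [c, mem_compl.1 hx]
      _ = 2 - r := by rw [inv_mul_cancel₀ hA.ne']; ring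
  have hlogc : ∑ x, Q x * log (c x) = (∑ x ∈ A, Q x) * log r⁻¹ := by
    rw [← sum_add_sum_compl A, sum_mul, ← add_zero (∑ x ∈ A, Q x * log r⁻¹)]
    congr 1
    · exact sum_congr rfl fun x hx => by simp [c, hx]
    · exact sum_eq_zero fun x hx => by simp [c, mem_compl.1 hx]
  have hsplit : ∑ x, Q x * log (R x * c x / Q x) = (∑ x ∈ A, Q x) * log r⁻¹ - kl Q R := by
    calc ∑ x, Q x * log (R x * c x / Q x)
        = ∑ x, (Q x * log (c x) - Q x * log (Q x / R x)) := by
          refine sum_congr rfl fun x _ => ?_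
          rw [show R x * c x / Q x = c x / (Q x / R x) by field_simp,
            log_div (hc x).ne' (div_pos (hQ x) (hR x)).ne']
          ring
      _ = (∑ x ∈ A, Q x) * log r⁻¹ - kl Q R := by rw [sum_sub_distrib, hlogc, kl]
  have := log_le_log (by linarith) (by linarith : 2 - r ≤ 2)
  rw [hsplit, hmass] at hJ
  linarith

theorem sum_prod_mul_apply [Fintype ι] [DecidableEq ι] [Fintype α] {f : α → ℝ}
    (hf : ∑ x, f x = 1) (g : α → ℝ) (i : ι) :
    ∑ xs : ι → α, (∏ j, f (xs j)) * g (xs i) = ∑ x, f x * g x := by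
  set F := Function.update (fun _ => f) i (f * g)
  have hF : ∀ j ∈ univ.erase i, F j = f := fun j hj =>
    Function.update_of_ne (ne_of_mem_erase hj) _ _
  have hFi : F i = f * g := Function.update_self _ _ _
  have hupd : ∀ xs : ι → α, (∏ j, f (xs j)) * g (xs i) = ∏ j, F j (xs j) := by
    intro xs
    rw [← mul_prod_erase univ (fun j => F j (xs j)) (mem_univ i),
      ← mul_prod_erase univ (fun j => f (xs j)) (mem_univ i),
      prod_congr rfl fun j hj => congrFun (hF j hj) (xs j), hFi, Pi.mul_apply]
    ring
  rw [sum_congr rfl fun xs _ => hupd xs, ← Fintype.prod_sum,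
    ← mul_prod_erase univ _ (mem_univ i), prod_congr rfl fun j hj => by rw [hF j hj, hf],
    prod_const_one, mul_one, hFi]
  rfl

theorem kl_pi [Fintype ι] [DecidableEq ι] [Fintype α] {P R : α → ℝ} (hP : ∀ x, 0 < P x)
    (hP₁ : ∑ x, P x = 1) (hR : ∀ x, 0 < R x) :
    kl (fun xs : ι → α => ∏ i, P (xs i)) (fun xs => ∏ i, R (xs i)) =
      Fintype.card ι * kl P R := by
  have hlog : ∀ xs : ι → α,
      log ((∏ i, P (xs i)) / ∏ i, R (xs i)) = ∑ i, log (P (xs i) / R (xs i)) := fun xs => by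
    rw [← prod_div_distrib, log_prod fun i _ => (div_pos (hP _) (hR _)).ne']
  simp only [kl, hlog, mul_sum]
  rw [sum_comm]
  simp only [sum_prod_mul_apply hP₁ (fun x => log (P x / R x)), sum_const, card_univ,
    nsmul_eq_mul, mul_sum]

theorem sum_sum_eq_sum_sum_lt_add {M : Type*} [AddCommMonoid M] [Fintype ι] [LinearOrder ι]
    {f : ι → ι → M} (hf : ∀ i, f i i = 0) :
    ∑ i, ∑ j, f i j = ∑ i, ∑ j, if i < j then f i j + f j i else 0 := by
  have hsplit : ∀ i j,
      f i j = (if i < j then f i j else 0) + (if j < i then f i j else 0) := by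
    intro i j
    rcases lt_trichotomy i j with h | rfl | h
    · simp [h, h.not_gt]
    · simp [hf]
    · simp [h, h.not_gt]
  have hswap : ∑ i, ∑ j, (if j < i then f i j else 0) =
      ∑ i, ∑ j, if i < j then f j i else 0 :=
    sum_comm
  rw [sum_congr rfl fun i _ => sum_congr rfl fun j _ => hsplit i j]
  simp_rw [sum_add_distrib, hswap, ← sum_add_distrib, ite_add_ite, add_zero]

theorem log_card_div_four_le_sum_kl [Fintype ι] [DecidableEq ι] [Nonempty ι] [Fintype α]
    {Q : ι → α → ℝ} (hQ : ∀ k x, 0 < Q k x) (hQ₁ : ∀ k, ∑ x, Q k x = 1) (ψ : α → ι)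
    (hψ : ∀ k, 1 / 2 ≤ ∑ x with ψ x = k, Q k x) :
    log (Fintype.card ι / 4) ≤ 2 / Fintype.card ι ^ 2 * ∑ k, ∑ l, kl (Q k) (Q l) := by
  set M : ℝ := (Fintype.card ι : ℝ)
  have hM : 0 < M := Nat.cast_pos.2 Fintype.card_pos
  have hw : ∑ _l : ι, M⁻¹ = 1 := by simp [M, hM.ne']
  set Qbar : α → ℝ := fun x => ∑ l, M⁻¹ * Q l x
  have hQbar : ∀ x, 0 < Qbar x := fun x =>
    sum_pos (fun l _ => mul_pos (inv_pos.2 hM) (hQ l x)) univ_nonempty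
  have hQbar₁ : ∑ x, Qbar x = 1 := by
    rw [sum_comm]
    exact (sum_congr rfl fun l _ => by rw [← mul_sum, hQ₁, mul_one]).trans hw
  set q : ι → ℝ := fun k => ∑ x with ψ x = k, Qbar x
  have hq₁ : ∑ k, q k = 1 := (sum_fiberwise univ ψ Qbar).trans hQbar₁
  have hq : ∀ k, 0 < q k := fun k => sum_pos (fun x _ => hQbar x)
    (nonempty_of_sum_ne_zero (f := Q k) (ne_of_gt (by linarith [hψ k])))
  have hlower : ∀ k, 1 / 2 * log (q k)⁻¹ - log 2 ≤ kl (Q k) Qbar := fun k => by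
    have hq_le : q k ≤ 1 := hq₁ ▸ single_le_sum (fun l _ => (hq l).le) (mem_univ k)
    have : 0 ≤ log (q k)⁻¹ := log_nonneg (one_le_inv₀ (hq k) |>.2 hq_le)
    calc 1 / 2 * log (q k)⁻¹ - log 2
        ≤ (∑ x with ψ x = k, Q k x) * log (q k)⁻¹ - log 2 := by gcongr; exact hψ k
      _ ≤ kl (Q k) Qbar := mul_log_inv_sub_log_two_le_kl (hQ k) (hQ₁ k) hQbar hQbar₁ (hq k)
  have hupper : ∀ k, kl (Q k) Qbar ≤ ∑ l, M⁻¹ * kl (Q k) (Q l) := fun k =>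
    kl_mixture_right_le (hQ k) (fun _ _ => (inv_pos.2 hM).le) hw (fun l _ => hQ l)
  have hsum := sum_le_sum fun k (_ : k ∈ univ) => (hlower k).trans (hupper k)
  simp only [sum_sub_distrib, ← mul_sum, sum_const, card_univ, nsmul_eq_mul] at hsum
  have hjensen := card_mul_log_card_le_sum_log_inv hq hq₁
  have hlog4 : log (M / 4) = log M - 2 * log 2 := by
    rw [log_div hM.ne' (by norm_num), show (4 : ℝ) = 2 ^ 2 by norm_num, log_pow]
    push_cast; ring
  rw [hlog4, div_mul_eq_mul_div, le_div_iff₀ (by positivity)]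
  have h2M := mul_le_mul_of_nonneg_left hsum (by positivity : (0 : ℝ) ≤ 2 * M)
  rw [show 2 * M * (M⁻¹ * ∑ k, ∑ l, kl (Q k) (Q l)) = 2 * ∑ k, ∑ l, kl (Q k) (Q l) by
    field_simp] at h2M
  linarith [mul_le_mul_of_nonneg_left hjensen hM.le]

end

theorem fano_variant_general {X : Type*} [Fintype X] (M n : ℕ) (hM : 5 ≤ M)
    (P : Fin M → X → ℝ)
    (hpos : ∀ k x, 0 < P k x) (hsum : ∀ k, ∑ x, P k x = 1)
    (hcond : (n : ℝ) < Real.log ((M : ℝ) / 4) /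
        (2 / (M : ℝ) ^ 2 *
          ∑ k : Fin M, ∑ l : Fin M, if k < l then
            ((∑ x, P k x * Real.log (P k x / P l x)) +
              (∑ x, P l x * Real.log (P l x / P k x)))
          else 0))
    (φ : (Fin n → X) → Fin M) :
    ∃ k : Fin M,
      (1 : ℝ) / 2 ≤ ∑ xs : Fin n → X, if φ xs ≠ k then ∏ i, P k (xs i) else 0 := by
  by_contra! herr
  have : Nonempty (Fin M) := ⟨⟨0, by omega⟩⟩
  set Q : Fin M → (Fin n → X) → ℝ := fun k xs => ∏ i, P k (xs i)
  have hQ : ∀ k xs, 0 < Q k xs := fun k xs => prod_pos fun i _ => hpos k (xs i)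
  have hQ₁ : ∀ k, ∑ xs, Q k xs = 1 := fun k => by
    simp only [Q, ← Fintype.prod_sum, hsum, prod_const_one]
  have hsucc : ∀ k, 1 / 2 ≤ ∑ xs with φ xs = k, Q k xs := fun k => by
    have := herr k
    rw [← sum_filter] at this
    linarith [sum_filter_add_sum_filter_not univ (φ · = k) (Q k), hQ₁ k]
  have htensor : ∀ k l, kl (Q k) (Q l) = n * kl (P k) (P l) := fun k l => by
    simpa using kl_pi (ι := Fin n) (hpos k) (hsum k) (hpos l)
  have hfano := log_card_div_four_le_sum_kl hQ hQ₁ φ hsucc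
  simp only [Fintype.card_fin, htensor, ← mul_sum] at hfano
  rw [sum_sum_eq_sum_sum_lt_add fun k => kl_self (P k), mul_left_comm] at hfano
  have hlog : 0 < log ((M : ℝ) / 4) := log_pos (by rw [lt_div_iff₀ (by norm_num)]; norm_cast)
  have hdenom := pos_of_mul_pos_right (hlog.trans_le hfano) n.cast_nonneg
  exact (div_le_of_le_mul₀ hdenom.le n.cast_nonneg hfano).not_gt hcond

/-- Lemma (Fano variant): if `n` is below the stated threshold involving pairwise
symmetrized KL divergences, then any decoder over the family `P_1, …, P_M` is
unreliable: it errs with probability at least `1/2` for some index. -/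
theorem fano_variant {X : Type*} [Fintype X] (M n : ℕ) (hM : 5 ≤ M) (hn : 1 ≤ n)
    (P : Fin M → X → ℝ)
    (hpos : ∀ k x, 0 < P k x) (hsum : ∀ k, ∑ x, P k x = 1)
    (hcond : (n : ℝ) < Real.log ((M : ℝ) / 4) /
        (2 / (M : ℝ) ^ 2 *
          ∑ k : Fin M, ∑ l : Fin M, if k < l then
            ((∑ x, P k x * Real.log (P k x / P l x)) +
              (∑ x, P l x * Real.log (P l x / P k x)))
          else 0))
    (φ : (Fin n → X) → Fin M) :
    ∃ k : Fin M,
      (1 : ℝ) / 2 ≤ ∑ xs : Fin n → X, if φ xs ≠ k then ∏ i, P k (xs i) else 0 :=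
  fano_variant_general M n hM P hpos hsum hcond φ
end
end

section
/- Let m ≥ 2 be an integer and λ > 0 a real with ω := λ·m ≥ 2. Let G^{st} be the graph on m vertices obtained from the complete graph K_m by removing one edge (s,t), and let θ be the parameter vector with θ_{uv} = λ for every edge (u,v) of G^{st} and θ_{st} = 0. Then under the Ising model P_θ: (i) the likelihood ratio satisfies P_θ[X_s X_t = +1] / P_θ[X_s X_t = −1] ≥ exp(ω/2 − 3λ/2)/(m+1); and (ii) the mean parameter satisfies E_θ[X_s X_t] ≥ 1 − 2(m+1) exp(3λ/2) / ( exp(ω/2) + (m+1) exp(3λ/2) ). -/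
open scoped Classical BigOperators
open Real

noncomputable section

/-!
Write `a = ∑ᵤ xᵤ`. On `Kₘ` minus the edge `st` the energy is `λ (a² - m) / 2 - λ xₛ xₜ`.
If `xₛ ≠ xₜ`, flipping `xₜ` or `xₛ` aligns the pair and multiplies the weight by `exp (± 2λ xₛ a)`,
so the two flips together weigh at least `exp (2λ|a|)` times `x`. With
`c = (m + 1) / 3 · exp ((3 - m) λ / 2)`, an anti-aligned configuration therefore weighs at most
`c` times its two flips, unless `c · exp (2λ|a|) < 1`; then `|a| ≤ (m - 3) / 4` and, as `λm ≥ 2`,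
it weighs at most `c · 2^(1-m)` times the all-plus configuration. Both flips are bijections from
the anti-aligned onto the aligned configurations, so summing gives `D ≤ 2cN + cN` for the
anti-aligned and aligned partition sums `D`, `N`. Both claims follow, as the likelihood ratio is
`N / D` and `E[XₛXₜ] = (N - D) / (N + D)`.
-/

lemma sgn_mul_self (b : Bool) : sgn b * sgn b = 1 := by cases b <;> simp [sgn]

lemma sgn_not (b : Bool) : sgn (!b) = -sgn b := by cases b <;> simp [sgn]

lemma abs_sgn (b : Bool) : |sgn b| = 1 := by cases b <;> simp [sgn]

lemma sgn_eq_neg_of_ne {a b : Bool} (h : a ≠ b) : sgn b = -sgn a := by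
  cases a <;> cases b <;> simp_all [sgn]

lemma sgn_mul_sgn_eq_one_iff (a b : Bool) : sgn a * sgn b = 1 ↔ a = b := by
  cases a <;> cases b <;> norm_num [sgn]

lemma sgn_mul_sgn_eq_neg_one_iff (a b : Bool) : sgn a * sgn b = -1 ↔ a ≠ b := by
  cases a <;> cases b <;> norm_num [sgn]

section Flip

variable {ι : Type*} [DecidableEq ι]

def flipSpin (t : ι) (x : ι → Bool) : ι → Bool := Function.update x t (!x t)

lemma flipSpin_involutive (t : ι) : Function.Involutive (flipSpin t) := by
  intro x
  simp [flipSpin, Function.update_idem]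

lemma flipSpin_of_ne {s t : ι} (h : s ≠ t) (x : ι → Bool) : flipSpin t x s = x s :=
  Function.update_of_ne h _ x

lemma flipSpin_self (t : ι) (x : ι → Bool) : flipSpin t x t = !x t :=
  Function.update_self _ _ _

lemma flipSpin_aligned_iff {s t : ι} (hst : s ≠ t) (x : ι → Bool) :
    flipSpin t x s = flipSpin t x t ↔ x s ≠ x t := by
  rw [flipSpin_of_ne hst, flipSpin_self]
  cases x s <;> cases x t <;> simp

variable [Fintype ι]

lemma sum_sgn_flipSpin (t : ι) (x : ι → Bool) :
    ∑ u, sgn (flipSpin t x u) = ∑ u, sgn (x u) - 2 * sgn (x t) := by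
  have h : ∀ u, sgn (flipSpin t x u) = sgn (x u) - if u = t then 2 * sgn (x t) else 0 := by
    intro u
    by_cases hu : u = t
    · subst hu; simp [flipSpin, sgn_not]; ring
    · simp [flipSpin, hu]
  simp [h, Finset.sum_sub_distrib]

lemma sum_antialigned_flipSpin {s t : ι} (hst : s ≠ t) (g : (ι → Bool) → ℝ) :
    ∑ x ∈ Finset.univ.filter (fun x => x s ≠ x t), g (flipSpin t x) =
      ∑ x ∈ Finset.univ.filter (fun x => x s = x t), g x := by
  refine Finset.sum_nbij' (flipSpin t) (flipSpin t) ?_ ?_ ?_ ?_ (fun _ _ => rfl)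
  · intro x; simp [flipSpin_aligned_iff hst]
  · intro x; simp [flipSpin_aligned_iff hst]
  · intro x _; exact flipSpin_involutive t x
  · intro x _; exact flipSpin_involutive t x

lemma sum_antialigned_flipSpin_left {s t : ι} (hst : s ≠ t) (g : (ι → Bool) → ℝ) :
    ∑ x ∈ Finset.univ.filter (fun x => x s ≠ x t), g (flipSpin s x) =
      ∑ x ∈ Finset.univ.filter (fun x => x s = x t), g x := by
  simpa only [ne_comm, eq_comm] using sum_antialigned_flipSpin hst.symm g

lemma two_mul_card_antialigned {s t : ι} (hst : s ≠ t) :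
    2 * (Finset.univ.filter (fun x : ι → Bool => x s ≠ x t)).card = 2 ^ Fintype.card ι := by
  have h := sum_antialigned_flipSpin hst (fun _ => (1 : ℝ))
  simp only [Finset.sum_const, nsmul_eq_mul, mul_one, Nat.cast_inj] at h
  have htotal := Finset.card_filter_add_card_filter_not (s := Finset.univ)
    (fun x : ι → Bool => x s ≠ x t)
  simp only [not_not, Finset.card_univ, Fintype.card_fun, Fintype.card_bool] at htotal
  omega

end Flip

lemma energy_eq_half_sum {p : ℕ} {θ : Fin p → Fin p → ℝ} (hθ : IsSymParam θ) (x : Fin p → Bool) :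
    energy θ x = (∑ u, ∑ v, θ u v * sgn (x u) * sgn (x v)) / 2 := by
  set f : Fin p → Fin p → ℝ := fun u v => θ u v * sgn (x u) * sgn (x v)
  have hsplit : ∀ u v, f u v = (if u < v then f u v else 0) + (if v < u then f v u else 0) := by
    intro u v
    rcases lt_trichotomy u v with h | rfl | h
    · simp [h, h.not_gt]
    · simp [f, hθ.2]
    · simp only [h, h.not_gt, if_false, if_true, f, hθ.1 u v]; ring
  have hswap : ∑ u, ∑ v, (if v < u then f v u else 0) = ∑ u, ∑ v, (if u < v then f u v else 0) :=
    Finset.sum_comm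
  have hE : energy θ x = ∑ u, ∑ v, (if u < v then f u v else 0) := rfl
  rw [Finset.sum_congr rfl fun u _ => Finset.sum_congr rfl fun v _ => hsplit u v]
  simp only [Finset.sum_add_distrib, hswap, ← hE]
  ring

section PartialPartitionFunctions

variable {p : ℕ} (θ : Fin p → Fin p → ℝ) (s t : Fin p)

def Zaligned : ℝ := ∑ x ∈ Finset.univ.filter (fun x : Fin p → Bool => x s = x t), exp (energy θ x)

def Zanti : ℝ := ∑ x ∈ Finset.univ.filter (fun x : Fin p → Bool => x s ≠ x t), exp (energy θ x)

lemma Zpart_eq_Zaligned_add_Zanti : Zpart θ = Zaligned θ s t + Zanti θ s t :=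
  (Finset.sum_filter_add_sum_filter_not _ _ _).symm

lemma Zaligned_pos : 0 < Zaligned θ s t :=
  Finset.sum_pos (fun _ _ => exp_pos _) ⟨fun _ => true, by simp⟩

lemma Zanti_pos {s t : Fin p} (hst : s ≠ t) : 0 < Zanti θ s t :=
  Finset.sum_pos (fun _ _ => exp_pos _) ⟨fun u => decide (u = s), by simp [Ne.symm hst]⟩

lemma prob1_aligned :
    prob1 θ (fun x => sgn (x s) * sgn (x t) = 1) = Zaligned θ s t / Zpart θ := by
  simp only [prob1, isingP, ← Finset.sum_filter, sgn_mul_sgn_eq_one_iff, Zaligned, Finset.sum_div]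

lemma prob1_anti :
    prob1 θ (fun x => sgn (x s) * sgn (x t) = -1) = Zanti θ s t / Zpart θ := by
  simp only [prob1, isingP, ← Finset.sum_filter, sgn_mul_sgn_eq_neg_one_iff, Zanti, Finset.sum_div]

lemma meanPar_eq : meanPar θ s t = (Zaligned θ s t - Zanti θ s t) / Zpart θ := by
  rw [meanPar, ← Finset.sum_filter_add_sum_filter_not _ (fun x : Fin p → Bool => x s = x t),
    Zaligned, Zanti, sub_div, Finset.sum_div, Finset.sum_div, sub_eq_add_neg,
    ← Finset.sum_neg_distrib]
  congr 1 <;> refine Finset.sum_congr rfl fun x hx => ?_ <;> rw [Finset.mem_filter] at hx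
  · rw [(sgn_mul_sgn_eq_one_iff _ _).2 hx.2, isingP, mul_one]
  · rw [(sgn_mul_sgn_eq_neg_one_iff _ _).2 hx.2, isingP, mul_neg_one]

end PartialPartitionFunctions

lemma exp_abs_le_exp_add_exp_neg (v : ℝ) : exp |v| ≤ exp v + exp (-v) := by
  have h := Real.cosh_abs v
  rw [Real.cosh_eq, Real.cosh_eq] at h
  linarith [exp_pos (-|v|)]

lemma two_le_exp_seven_tenths : (2 : ℝ) ≤ exp (7 / 10) := by
  rw [← exp_log (two_pos : (0 : ℝ) < 2)]
  exact exp_le_exp.2 (Real.log_two_lt_d9.le.trans (by norm_num))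

lemma exponent_le_of_abs_le {m lam a : ℝ} (hlam : 0 < lam) (hom : 2 ≤ lam * m)
    (ha : |a| ≤ (m - 3) / 4) :
    lam * (a ^ 2 - m) / 2 + lam + (m - 1) * (7 / 10) ≤
      (3 - m) * lam / 2 + (lam * (m ^ 2 - m) / 2 - lam) := by
  have hm : 3 ≤ m := by linarith [abs_nonneg a]
  have ha2 : a ^ 2 ≤ ((m - 3) / 4) ^ 2 := by
    rw [← sq_abs]; exact pow_le_pow_left₀ (abs_nonneg a) ha 2
  have hB : 0 ≤ (m ^ 2 - ((m - 3) / 4) ^ 2) / 2 - (m + 1) / 2 := by nlinarith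
  nlinarith [mul_nonneg (sub_nonneg.2 hom) hB, mul_le_mul_of_nonneg_left ha2 hlam.le]

lemma one_sub_two_mul_div_le_sub_div {A B N D : ℝ} (hA : 0 < A) (hB : 0 ≤ B) (hN : 0 < N)
    (hD : 0 ≤ D) (h : A * D ≤ B * N) : 1 - 2 * B / (A + B) ≤ (N - D) / (N + D) := by
  have hAB : 0 < A + B := by positivity
  rw [one_sub_div hAB.ne', div_le_div_iff₀ hAB (by positivity)]
  nlinarith

def completeMinusEdge {m : ℕ} (lam : ℝ) (s t : Fin m) : Fin m → Fin m → ℝ :=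
  fun u v => if u ≠ v ∧ ¬((u = s ∧ v = t) ∨ (u = t ∧ v = s)) then lam else 0

lemma completeMinusEdge_comm {m : ℕ} (lam : ℝ) (s t : Fin m) :
    completeMinusEdge lam s t = completeMinusEdge lam t s := by
  ext u v
  simp only [completeMinusEdge, or_comm]

lemma isSymParam_completeMinusEdge {m : ℕ} (lam : ℝ) (s t : Fin m) :
    IsSymParam (completeMinusEdge lam s t) := by
  refine ⟨fun u v => ?_, fun u => by simp [completeMinusEdge]⟩
  simp only [completeMinusEdge]
  congr 1
  apply propext
  constructor <;> rintro ⟨h1, h2⟩ <;> exact ⟨Ne.symm h1, by tauto⟩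

lemma completeMinusEdge_apply {m : ℕ} (lam : ℝ) {s t : Fin m} (hst : s ≠ t) (u v : Fin m) :
    completeMinusEdge lam s t u v = lam - (if u = v then lam else 0)
      - (if u = s ∧ v = t then lam else 0) - (if u = t ∧ v = s then lam else 0) := by
  unfold completeMinusEdge
  split_ifs <;> grind

lemma energy_completeMinusEdge {m : ℕ} (lam : ℝ) {s t : Fin m} (hst : s ≠ t) (x : Fin m → Bool) :
    energy (completeMinusEdge lam s t) x =
      lam * ((∑ u, sgn (x u)) ^ 2 - m) / 2 - lam * (sgn (x s) * sgn (x t)) := by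
  rw [energy_eq_half_sum (isSymParam_completeMinusEdge lam s t)]
  simp only [completeMinusEdge_apply lam hst, sub_mul, ite_mul, zero_mul, Finset.sum_sub_distrib,
    ite_and, Finset.sum_ite_irrel, Finset.sum_const_zero, Finset.sum_ite_eq, Finset.sum_ite_eq',
    Finset.mem_univ, if_true]
  have hdiag : ∑ u, lam * sgn (x u) * sgn (x u) = lam * m := by
    simp_rw [mul_assoc, sgn_mul_self]
    simp [mul_comm]
  have hsq : ∑ u, ∑ v, lam * sgn (x u) * sgn (x v) = lam * (∑ u, sgn (x u)) ^ 2 := by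
    rw [sq, Finset.sum_mul_sum, Finset.mul_sum]
    simp_rw [Finset.mul_sum, mul_assoc]
  rw [hdiag, hsq]
  ring

-- `3 * flipConst m lam` is the bound obtained on `Zanti / Zaligned`.
def flipConst (m : ℕ) (lam : ℝ) : ℝ := ((m : ℝ) + 1) / 3 * exp ((3 - m) * lam / 2)

section CompleteMinusEdge

variable {m : ℕ} {lam : ℝ} {s t : Fin m}

lemma flipConst_pos : 0 < flipConst m lam := by unfold flipConst; positivity

lemma exp_le_flipConst (hm : 2 ≤ m) : exp ((3 - m) * lam / 2) ≤ flipConst m lam := by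
  refine le_mul_of_one_le_left (exp_pos _).le ?_
  rw [le_div_iff₀ (by norm_num)]
  exact_mod_cast (by omega : 1 * 3 ≤ m + 1)

lemma energy_completeMinusEdge_flipSpin (hst : s ≠ t) {x : Fin m → Bool} (hx : x s ≠ x t) :
    energy (completeMinusEdge lam s t) (flipSpin t x) =
      energy (completeMinusEdge lam s t) x - 2 * lam * sgn (x t) * ∑ u, sgn (x u) := by
  simp only [energy_completeMinusEdge lam hst, sum_sgn_flipSpin, flipSpin_of_ne hst,
    flipSpin_self, sgn_not, sgn_eq_neg_of_ne hx]
  ring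

lemma energy_completeMinusEdge_const_true (hst : s ≠ t) :
    energy (completeMinusEdge lam s t) (fun _ => true) = lam * ((m : ℝ) ^ 2 - m) / 2 - lam := by
  simp [energy_completeMinusEdge lam hst, sgn]

lemma energy_completeMinusEdge_of_ne (hst : s ≠ t) {x : Fin m → Bool} (hx : x s ≠ x t) :
    energy (completeMinusEdge lam s t) x = lam * ((∑ u, sgn (x u)) ^ 2 - m) / 2 + lam := by
  rw [energy_completeMinusEdge lam hst, sgn_eq_neg_of_ne hx, mul_neg, sgn_mul_self]
  ring

lemma exp_energy_mul_two_pow_le (hm : 2 ≤ m) (hlam : 0 < lam) (hom : 2 ≤ lam * m) (hst : s ≠ t)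
    {x : Fin m → Bool} (hx : x s ≠ x t)
    (hsmall : flipConst m lam * exp (2 * lam * |∑ u, sgn (x u)|) < 1) :
    exp (energy (completeMinusEdge lam s t) x) * 2 ^ (m - 1) ≤
      flipConst m lam * exp (energy (completeMinusEdge lam s t) (fun _ => true)) := by
  set a := ∑ u, sgn (x u)
  have ha : |a| ≤ (m - 3) / 4 := by
    have h : exp ((3 - m) * lam / 2 + 2 * lam * |a|) < exp 0 := by
      rw [exp_add, exp_zero]
      exact lt_of_le_of_lt (by gcongr; exact exp_le_flipConst hm) hsmall
    nlinarith [exp_lt_exp.1 h]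
  have hpow : (2 : ℝ) ^ (m - 1) ≤ exp ((m - 1) * (7 / 10)) := by
    rw [show ((m : ℝ) - 1) = ((m - 1 : ℕ) : ℝ) by push_cast [Nat.cast_sub (by omega : 1 ≤ m)]; ring,
      exp_nat_mul]
    exact pow_le_pow_left₀ two_pos.le two_le_exp_seven_tenths _
  rw [energy_completeMinusEdge_of_ne hst hx, energy_completeMinusEdge_const_true hst]
  calc exp (lam * (a ^ 2 - m) / 2 + lam) * 2 ^ (m - 1)
      ≤ exp (lam * (a ^ 2 - m) / 2 + lam) * exp ((m - 1) * (7 / 10)) := by gcongr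
    _ ≤ exp ((3 - m) * lam / 2) * exp (lam * ((m : ℝ) ^ 2 - m) / 2 - lam) := by
      rw [← exp_add, ← exp_add]
      exact exp_le_exp.2 (exponent_le_of_abs_le hlam hom ha)
    _ ≤ _ := by gcongr; exact exp_le_flipConst hm

lemma exp_energy_le_of_ne (hm : 2 ≤ m) (hlam : 0 < lam) (hom : 2 ≤ lam * m) (hst : s ≠ t)
    {x : Fin m → Bool} (hx : x s ≠ x t) :
    exp (energy (completeMinusEdge lam s t) x) ≤
      flipConst m lam *
        (exp (energy (completeMinusEdge lam s t) (flipSpin t x)) +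
          exp (energy (completeMinusEdge lam s t) (flipSpin s x))) +
      flipConst m lam * exp (energy (completeMinusEdge lam s t) (fun _ => true)) / 2 ^ (m - 1) := by
  set c := flipConst m lam
  have hc : 0 < c := flipConst_pos
  set a := ∑ u, sgn (x u)
  set v := 2 * lam * sgn (x s) * a
  have hflip_t : energy (completeMinusEdge lam s t) (flipSpin t x) =
      energy (completeMinusEdge lam s t) x + v := by
    rw [energy_completeMinusEdge_flipSpin hst hx, sgn_eq_neg_of_ne hx]; ring
  have hflip_s : energy (completeMinusEdge lam s t) (flipSpin s x) =
      energy (completeMinusEdge lam s t) x - v := by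
    rw [completeMinusEdge_comm lam s t, energy_completeMinusEdge_flipSpin hst.symm (Ne.symm hx)]
  set E := energy (completeMinusEdge lam s t)
  have hv : |v| = 2 * lam * |a| := by
    simp only [v, abs_mul, abs_sgn, abs_of_pos hlam, abs_two, mul_one]
  by_cases hbig : 1 ≤ c * exp (2 * lam * |a|)
  · have hflips : exp (E x) ≤ c * (exp (E (flipSpin t x)) + exp (E (flipSpin s x))) :=
      calc exp (E x) ≤ c * exp |v| * exp (E x) := by
            rw [hv]; exact le_mul_of_one_le_left (exp_pos _).le hbig
        _ ≤ c * (exp v + exp (-v)) * exp (E x) := by gcongr; exact exp_abs_le_exp_add_exp_neg v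
        _ = c * (exp (E (flipSpin t x)) + exp (E (flipSpin s x))) := by
            rw [hflip_t, hflip_s, sub_eq_add_neg, exp_add, exp_add]; ring
    have : 0 ≤ c * exp (E fun _ => true) / 2 ^ (m - 1) := by positivity
    linarith
  · have hbalanced : exp (E x) ≤ c * exp (E fun _ => true) / 2 ^ (m - 1) :=
      (le_div_iff₀ (by positivity)).2 (exp_energy_mul_two_pow_le hm hlam hom hst hx (not_le.1 hbig))
    have : 0 ≤ c * (exp (E (flipSpin t x)) + exp (E (flipSpin s x))) := by positivity
    linarith

lemma exp_mul_Zanti_le (hm : 2 ≤ m) (hlam : 0 < lam) (hst : s ≠ t) (hom : 2 ≤ lam * m) :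
    exp (lam * m / 2) * Zanti (completeMinusEdge lam s t) s t ≤
      ((m : ℝ) + 1) * exp (3 * lam / 2) * Zaligned (completeMinusEdge lam s t) s t := by
  set θ := completeMinusEdge lam s t
  set c := flipConst m lam
  set F₁ := exp (energy θ fun _ => true)
  have hF₁ : F₁ ≤ Zaligned θ s t :=
    Finset.single_le_sum (f := fun x => exp (energy θ x)) (fun _ _ => (exp_pos _).le) (by simp)
  have hcard : ((Finset.univ.filter fun x : Fin m → Bool => x s ≠ x t).card : ℝ) = 2 ^ (m - 1) := by
    have h := two_mul_card_antialigned hst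
    rw [Fintype.card_fin, show 2 ^ m = 2 * 2 ^ (m - 1) by rw [← pow_succ']; congr; omega] at h
    exact_mod_cast Nat.eq_of_mul_eq_mul_left two_pos h
  have hsum : Zanti θ s t ≤ 2 * c * Zaligned θ s t + c * F₁ :=
    calc Zanti θ s t
        ≤ ∑ x ∈ Finset.univ.filter (fun x : Fin m → Bool => x s ≠ x t),
            (c * (exp (energy θ (flipSpin t x)) + exp (energy θ (flipSpin s x))) +
              c * F₁ / 2 ^ (m - 1)) :=
          Finset.sum_le_sum fun x hx =>
            exp_energy_le_of_ne hm hlam hom hst (Finset.mem_filter.1 hx).2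
      _ = 2 * c * Zaligned θ s t + c * F₁ := by
          rw [Finset.sum_add_distrib, ← Finset.mul_sum, Finset.sum_add_distrib,
            sum_antialigned_flipSpin hst (fun x => exp (energy θ x)),
            sum_antialigned_flipSpin_left hst (fun x => exp (energy θ x)), Finset.sum_const,
            nsmul_eq_mul, hcard, Zaligned]
          field_simp
          ring
  have hconst : exp (lam * m / 2) * (3 * c) = ((m : ℝ) + 1) * exp (3 * lam / 2) := by
    rw [show 3 * c = ((m : ℝ) + 1) * exp ((3 - m) * lam / 2) by simp only [c, flipConst]; ring,
      mul_left_comm, ← exp_add]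
    ring_nf
  calc exp (lam * m / 2) * Zanti θ s t ≤ exp (lam * m / 2) * (3 * c * Zaligned θ s t) := by
        gcongr
        have hc : 0 < c := flipConst_pos
        nlinarith [mul_le_mul_of_nonneg_left hF₁ hc.le]
    _ = ((m : ℝ) + 1) * exp (3 * lam / 2) * Zaligned θ s t := by rw [← hconst]; ring

end CompleteMinusEdge

/-- Lemma 3 (key separation result): for the Ising model on the complete graph `K_m`
minus edge `(s,t)` with uniform edge weight `λ` and `ω = λm ≥ 2`, the likelihood
ratio on `(s,t)` and the mean parameter `E[X_s X_t]` are lower bounded as stated. -/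
theorem key_separation (m : ℕ) (lam : ℝ) (s t : Fin m)
    (hm : 2 ≤ m) (hlam : 0 < lam) (hst : s ≠ t) (hom : 2 ≤ lam * (m : ℝ))
    (θ : Fin m → Fin m → ℝ)
    (hθ : θ = fun u v =>
      if u ≠ v ∧ ¬((u = s ∧ v = t) ∨ (u = t ∧ v = s)) then lam else 0) :
    Real.exp (lam * (m : ℝ) / 2 - 3 * lam / 2) / ((m : ℝ) + 1) ≤
        prob1 θ (fun x => sgn (x s) * sgn (x t) = 1) /
          prob1 θ (fun x => sgn (x s) * sgn (x t) = -1) ∧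
      1 - 2 * ((m : ℝ) + 1) * Real.exp (3 * lam / 2) /
          (Real.exp (lam * (m : ℝ) / 2) + ((m : ℝ) + 1) * Real.exp (3 * lam / 2)) ≤
        meanPar θ s t := by
  obtain rfl : θ = completeMinusEdge lam s t := hθ
  have hbound := exp_mul_Zanti_le hm hlam hst hom
  have hN := Zaligned_pos (completeMinusEdge lam s t) s t
  have hD := Zanti_pos (completeMinusEdge lam s t) hst
  have hZ : Zpart (completeMinusEdge lam s t) ≠ 0 := by
    rw [Zpart_eq_Zaligned_add_Zanti _ s t]; positivity
  constructor
  · rw [prob1_aligned, prob1_anti, div_div_div_cancel_right₀ hZ, exp_sub,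
      div_div, div_le_div_iff₀ (by positivity) hD]
    linarith
  · rw [meanPar_eq, Zpart_eq_Zaligned_add_Zanti _ s t, mul_assoc]
    exact one_sub_two_mul_div_le_sub_div (exp_pos _) (by positivity) hN hD.le (by linarith)
end
end

section
/- Let p ≥ 2 and n ≥ 1 be integers and let θ and θ' be two parameter vectors of Ising models on p vertices. If X_1, …, X_n are drawn i.i.d. from P_θ, then the probability that the rescaled log-likelihood under θ' is at least that under θ, i.e. P[ (1/n) Σ_{i=1}^n log P_{θ'}(X_i) ≥ (1/n) Σ_{i=1}^n log P_θ(X_i) ], is at most exp( −(n/2) · J(θ‖θ') ), where J(θ‖θ') = D((θ+θ')/2 ‖ θ) + D((θ+θ')/2 ‖ θ'). -/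
open scoped Classical BigOperators
open Real

noncomputable section

/-! On the event, `∏ P_θ(Xᵢ) ≤ ∏ √(P_θ(Xᵢ) P_θ'(Xᵢ))`, so its probability is at most the `n`-th
power of the Bhattacharyya coefficient `∑ₓ √(P_θ(x) P_θ'(x))` (a Chernoff bound with exponent `1/2`).
For Ising models `√(P_θ P_θ')` is proportional to the midpoint model `P_{(θ+θ')/2}`, which makes
that coefficient equal to `exp (-J(θ‖θ')/2)`. -/

section Bhattacharyya

variable {α : Type*} [Fintype α]

def bhattacharyya (P Q : α → ℝ) : ℝ := ∑ x, √(P x * Q x)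

theorem bhattacharyya_pos [Nonempty α] {P Q : α → ℝ} (hP : ∀ x, 0 < P x)
    (hQ : ∀ x, 0 < Q x) : 0 < bhattacharyya P Q :=
  Finset.sum_pos (fun x _ => Real.sqrt_pos.2 (mul_pos (hP x) (hQ x))) Finset.univ_nonempty

theorem sum_ite_prod_le_bhattacharyya_pow {n : ℕ} {P Q : α → ℝ} (hP : ∀ x, 0 ≤ P x)
    (hQ : ∀ x, 0 ≤ Q x) (A : (Fin n → α) → Prop)
    (hA : ∀ xs, A xs → ∏ i, P (xs i) ≤ ∏ i, Q (xs i)) :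
    ∑ xs : Fin n → α, (if A xs then ∏ i, P (xs i) else 0) ≤ bhattacharyya P Q ^ n := by
  rw [bhattacharyya, Fintype.sum_pow]
  refine Finset.sum_le_sum fun xs _ => ?_
  have hPn : 0 ≤ ∏ i, P (xs i) := Finset.prod_nonneg fun i _ => hP _
  split_ifs with hxs
  · calc ∏ i, P (xs i) = √((∏ i, P (xs i)) * ∏ i, P (xs i)) := (Real.sqrt_mul_self hPn).symm
      _ ≤ √((∏ i, P (xs i)) * ∏ i, Q (xs i)) :=
        Real.sqrt_le_sqrt (mul_le_mul_of_nonneg_left (hA xs hxs) hPn)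
      _ = ∏ i, √(P (xs i) * Q (xs i)) := by
        rw [← Finset.prod_mul_distrib, Real.sqrt_prod _ fun i _ => mul_nonneg (hP _) (hQ _)]
  · positivity

theorem sum_mul_log_div_add_sum_mul_log_div_of_geomMean {M P Q : α → ℝ} {c : ℝ}
    (hM : ∀ x, 0 < M x) (hP : ∀ x, 0 < P x) (hQ : ∀ x, 0 < Q x)
    (hgeom : ∀ x, M x * c = √(P x * Q x)) (hsum : ∑ x, M x = 1) :
    ∑ x, M x * log (M x / P x) + ∑ x, M x * log (M x / Q x) = -2 * log c := by
  have hlog : ∀ x, log (M x / P x) + log (M x / Q x) = -2 * log c := fun x => by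
    have hc : 0 < c :=
      pos_of_mul_pos_right (hgeom x ▸ Real.sqrt_pos.2 (mul_pos (hP x) (hQ x))) (hM x).le
    have hsq : (M x * c) ^ 2 = P x * Q x := by
      rw [hgeom, Real.sq_sqrt (mul_pos (hP x) (hQ x)).le]
    have := congrArg log hsq
    rw [log_pow, log_mul (hM x).ne' hc.ne', log_mul (hP x).ne' (hQ x).ne'] at this
    rw [log_div (hM x).ne' (hP x).ne', log_div (hM x).ne' (hQ x).ne']
    push_cast at this
    linarith
  rw [← Finset.sum_add_distrib]
  simp_rw [← mul_add, hlog, ← Finset.sum_mul, hsum, one_mul]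

end Bhattacharyya

theorem prod_le_prod_of_inv_mul_sum_log_le {n : ℕ} {a b : Fin n → ℝ} (ha : ∀ i, 0 < a i)
    (hb : ∀ i, 0 < b i)
    (h : 1 / (n : ℝ) * ∑ i, log (a i) ≤ 1 / (n : ℝ) * ∑ i, log (b i)) :
    ∏ i, a i ≤ ∏ i, b i := by
  rcases n.eq_zero_or_pos with rfl | hn
  · simp
  have hlog : ∑ i, log (a i) ≤ ∑ i, log (b i) :=
    le_of_mul_le_mul_left h (by positivity)
  calc ∏ i, a i = exp (∑ i, log (a i)) := by
        simp only [exp_sum, exp_log (ha _)]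
    _ ≤ exp (∑ i, log (b i)) := exp_le_exp.2 hlog
    _ = ∏ i, b i := by simp only [exp_sum, exp_log (hb _)]

section Ising

variable {p : ℕ}

theorem Zpart_pos (θ : Fin p → Fin p → ℝ) : 0 < Zpart θ :=
  Finset.sum_pos (fun _ _ => exp_pos _) Finset.univ_nonempty

theorem isingP_pos (θ : Fin p → Fin p → ℝ) (x : Fin p → Bool) : 0 < isingP θ x :=
  div_pos (exp_pos _) (Zpart_pos θ)

theorem sum_isingP (θ : Fin p → Fin p → ℝ) : ∑ x, isingP θ x = 1 := by
  unfold isingP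
  rw [← Finset.sum_div, ← Zpart, div_self (Zpart_pos θ).ne']

theorem energy_midpoint (θ θ' : Fin p → Fin p → ℝ) (x : Fin p → Bool) :
    energy (fun s t => (θ s t + θ' s t) / 2) x = (energy θ x + energy θ' x) / 2 := by
  simp only [energy, ← Finset.sum_add_distrib, Finset.sum_div]
  refine Finset.sum_congr rfl fun s _ => Finset.sum_congr rfl fun t _ => ?_
  split_ifs <;> ring

theorem isingP_midpoint_mul (θ θ' : Fin p → Fin p → ℝ) (x : Fin p → Bool) :
    isingP (fun s t => (θ s t + θ' s t) / 2) x *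
        (Zpart (fun s t => (θ s t + θ' s t) / 2) / √(Zpart θ * Zpart θ')) =
      √(isingP θ x * isingP θ' x) := by
  have hZ := (Zpart_pos (fun s t => (θ s t + θ' s t) / 2)).ne'
  have hexp : √(exp (energy θ x) * exp (energy θ' x)) =
      exp (energy (fun s t => (θ s t + θ' s t) / 2) x) := by
    rw [← exp_add, sqrt_eq_iff_mul_self_eq_of_pos (exp_pos _), ← exp_add, energy_midpoint]
    ring_nf
  rw [isingP, isingP, isingP, div_mul_div_comm (exp (energy θ x)),
    Real.sqrt_div' _ (mul_pos (Zpart_pos θ) (Zpart_pos θ')).le, hexp]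
  field_simp

theorem bhattacharyya_isingP (θ θ' : Fin p → Fin p → ℝ) :
    bhattacharyya (isingP θ) (isingP θ') =
      Zpart (fun s t => (θ s t + θ' s t) / 2) / √(Zpart θ * Zpart θ') := by
  simp_rw [bhattacharyya, ← isingP_midpoint_mul, ← Finset.sum_mul, sum_isingP, one_mul]

theorem Jdiv_eq_neg_two_mul_log_bhattacharyya (θ θ' : Fin p → Fin p → ℝ) :
    Jdiv θ θ' = -2 * log (bhattacharyya (isingP θ) (isingP θ')) := by
  rw [bhattacharyya_isingP]
  exact sum_mul_log_div_add_sum_mul_log_div_of_geomMean (isingP_pos _) (isingP_pos θ)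
    (isingP_pos θ') (isingP_midpoint_mul θ θ') (sum_isingP _)

end Ising

theorem likelihood_large_deviations_general (p n : ℕ)
    (θ θ' : Fin p → Fin p → ℝ) :
    probn n θ (fun xs =>
        (1 / (n : ℝ)) * ∑ i, Real.log (isingP θ (xs i)) ≤
          (1 / (n : ℝ)) * ∑ i, Real.log (isingP θ' (xs i))) ≤
      Real.exp (-(n : ℝ) / 2 * Jdiv θ θ') := by
  have hB := bhattacharyya_pos (isingP_pos θ) (isingP_pos θ')
  calc _ ≤ bhattacharyya (isingP θ) (isingP θ') ^ n :=
        sum_ite_prod_le_bhattacharyya_pow (fun x => (isingP_pos θ x).le)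
          (fun x => (isingP_pos θ' x).le) _ fun xs =>
          prod_le_prod_of_inv_mul_sum_log_le (fun i => isingP_pos θ _) fun i => isingP_pos θ' _
    _ = exp (-(n : ℝ) / 2 * Jdiv θ θ') := by
      rw [Jdiv_eq_neg_two_mul_log_bhattacharyya, ← exp_log (pow_pos hB n), log_pow]
      congr 1
      ring

/-- Lemma 6 (large deviations for the likelihood ratio test): under `n` i.i.d.
samples from `P_θ`, the probability that the rescaled log-likelihood under `θ'` is
at least that under `θ` is at most `exp(-(n/2)·J(θ‖θ'))`. -/
theorem likelihood_large_deviations (p n : ℕ) (hp : 2 ≤ p) (hn : 1 ≤ n)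
    (θ θ' : Fin p → Fin p → ℝ) :
    probn n θ (fun xs =>
        (1 / (n : ℝ)) * ∑ i, Real.log (isingP θ (xs i)) ≤
          (1 / (n : ℝ)) * ∑ i, Real.log (isingP θ' (xs i))) ≤
      Real.exp (-(n : ℝ) / 2 * Jdiv θ θ') :=
  likelihood_large_deviations_general p n θ θ'
end
end

section
/- Let p ≥ 2 be an integer and let G = (V,E) and G' = (V,E') be two graphs on p vertices with parameter vectors θ supported on E and θ' supported on E'. For x ∈ {−1,+1}^p define Δ(x) = Σ_{(u,v) ∈ E} θ_{uv} x_u x_v − Σ_{(u,v) ∈ E'} θ'_{uv} x_u x_v. Then for every edge (s,t) ∈ E \ E' and every configuration x ∈ {−1,+1}^p, there exists a configuration x' agreeing with x on all coordinates outside {s,t} and differing from x in x_s, in x_t, or in both, such that |Δ(x') − Δ(x)| ≥ |θ_{st}|. -/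
open scoped Classical BigOperators
open Real

noncomputable section

/-! `energy θ x - energy θ' x` is the energy of the single parameter array `ψ = θ - θ'`, and
`ψ s t = θ s t` because `(s, t) ∉ E'`. For any pairwise energy the mixed second difference
`E x - E x^s - E x^t + E x^{st}` only sees the interaction between `s` and `t`, where it equals
`4 ψ_{st} x_s x_t`. It is thus the alternating sum of the three increments obtained by flipping
`s`, `t` or both, so one of these increments has absolute value at least `4|θ_{st}| / 3`. -/

def flipAt {α : Type*} [DecidableEq α] (x : α → Bool) (s : α) : α → Bool :=
  Function.update x s (!x s)

lemma flipAt_apply {α : Type*} [DecidableEq α] (x : α → Bool) (s u : α) :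
    flipAt x s u = if u = s then !x u else x u := by
  by_cases h : u = s <;> simp [flipAt, h]

lemma flipAt_ne_self {α : Type*} [DecidableEq α] (x : α → Bool) (s : α) : flipAt x s ≠ x :=
  fun h => by simpa [flipAt_apply] using congrFun h s

lemma energy_sub {p : ℕ} (θ θ' : Fin p → Fin p → ℝ) (x : Fin p → Bool) :
    energy θ x - energy θ' x = energy (θ - θ') x := by
  simp only [energy, ← Finset.sum_sub_distrib]
  refine Finset.sum_congr rfl fun a _ => Finset.sum_congr rfl fun b _ => ?_
  split_ifs <;> simp [sub_mul]

lemma sgn_mul_sgn_second_difference {α : Type*} [DecidableEq α] {s t : α} (hst : s ≠ t)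
    (x : α → Bool) (a b : α) (hab : a ≠ b) :
    sgn (x a) * sgn (x b) - sgn (flipAt x s a) * sgn (flipAt x s b)
      - sgn (flipAt x t a) * sgn (flipAt x t b)
      + sgn (flipAt (flipAt x s) t a) * sgn (flipAt (flipAt x s) t b)
      = if (a, b) = (s, t) ∨ (a, b) = (t, s) then 4 * sgn (x s) * sgn (x t) else 0 := by
  by_cases has : a = s <;> by_cases hat : a = t <;> by_cases hbs : b = s <;>
    by_cases hbt : b = t <;> simp_all [flipAt_apply, sgn_not] <;> ring

lemma energy_second_difference {p : ℕ} (ψ : Fin p → Fin p → ℝ) {s t : Fin p} (hst : s ≠ t)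
    (hψ : ψ t s = ψ s t) (x : Fin p → Bool) :
    energy ψ x - energy ψ (flipAt x s) - energy ψ (flipAt x t)
      + energy ψ (flipAt (flipAt x s) t) = 4 * ψ s t * sgn (x s) * sgn (x t) := by
  let term : Fin p × Fin p → ℝ := fun q =>
    if q.1 < q.2 then ψ q.1 q.2 * (if q = (s, t) ∨ q = (t, s) then 4 * sgn (x s) * sgn (x t)
      else 0) else 0
  calc _ = ∑ q, term q := by
        simp only [energy, ← Finset.sum_sub_distrib, ← Finset.sum_add_distrib, term,
          ← Fintype.sum_prod_type']
        refine Finset.sum_congr rfl fun q _ => ?_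
        by_cases hlt : q.1 < q.2
        · have h := sgn_mul_sgn_second_difference hst x q.1 q.2 hlt.ne
          rw [Prod.mk.eta] at h
          simp only [if_pos hlt, ← h]
          ring
        · simp [hlt]
    _ = term (s, t) + term (t, s) :=
        Finset.sum_eq_add_of_mem _ _ (Finset.mem_univ _) (Finset.mem_univ _)
          (by simp [hst]) fun q _ hq => by simp [term, hq.1, hq.2]
    _ = _ := by
        rcases hst.lt_or_gt with h | h
        · simp [term, h, h.not_gt]; ring
        · simp [term, h, h.not_gt, hψ]; ring

lemma exists_le_abs_of_le_abs_add_sub {a b c m : ℝ} (h : 3 * m ≤ |a + b - c|) :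
    m ≤ |a| ∨ m ≤ |b| ∨ m ≤ |c| := by
  by_contra! hlt
  have := abs_sub (a + b) c
  have := abs_add_le a b
  linarith [hlt.1, hlt.2.1, hlt.2.2]

lemma exists_flipAt_le_abs_energy_sub {p : ℕ} (ψ : Fin p → Fin p → ℝ) {s t : Fin p}
    (hst : s ≠ t) (hψ : ψ t s = ψ s t) (x : Fin p → Bool) :
    ∃ x' : Fin p → Bool, (∀ u : Fin p, u ≠ s → u ≠ t → x' u = x u) ∧ x' ≠ x ∧
      |ψ s t| ≤ |energy ψ x' - energy ψ x| := by
  set E := energy ψ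
  have h3 : 3 * |ψ s t| ≤
      |(E (flipAt x s) - E x) + (E (flipAt x t) - E x) - (E (flipAt (flipAt x s) t) - E x)| := by
    rw [show (E (flipAt x s) - E x) + (E (flipAt x t) - E x) - (E (flipAt (flipAt x s) t) - E x)
        = -(E x - E (flipAt x s) - E (flipAt x t) + E (flipAt (flipAt x s) t)) by ring,
      abs_neg, energy_second_difference ψ hst hψ x, abs_mul, abs_mul, abs_mul, abs_sgn,
      abs_sgn, abs_of_pos (four_pos : (0 : ℝ) < 4)]
    linarith [abs_nonneg (ψ s t)]
  rcases exists_le_abs_of_le_abs_add_sub h3 with h | h | h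
  · exact ⟨flipAt x s, fun u hus _ => by simp [flipAt_apply, hus], flipAt_ne_self x s, h⟩
  · exact ⟨flipAt x t, fun u _ hut => by simp [flipAt_apply, hut], flipAt_ne_self x t, h⟩
  · exact ⟨flipAt (flipAt x s) t, fun u hus hut => by simp [flipAt_apply, hus, hut],
      fun h => by simpa [flipAt_apply, hst.symm] using congrFun h t, h⟩

theorem flipping_lemma_general (p : ℕ)
    (G G' : SimpleGraph (Fin p)) (θ θ' : Fin p → Fin p → ℝ)
    (hθsym : IsSymParam θ)
    (hθ'supp : ∀ u v : Fin p, ¬ G'.Adj u v → θ' u v = 0)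
    (s t : Fin p) (hst : G.Adj s t ∧ ¬ G'.Adj s t)
    (x : Fin p → Bool) :
    ∃ x' : Fin p → Bool, (∀ u : Fin p, u ≠ s → u ≠ t → x' u = x u) ∧ x' ≠ x ∧
      |θ s t| ≤ |(energy θ x' - energy θ' x') - (energy θ x - energy θ' x)| := by
  obtain ⟨hadj, hnadj⟩ := hst
  have hst' : (θ - θ') s t = θ s t := by simp [hθ'supp s t hnadj]
  have hts' : (θ - θ') t s = (θ - θ') s t := by
    simp [hθsym.1 t s, hθ'supp s t hnadj, hθ'supp t s fun h => hnadj h.symm]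
  rw [← hst']
  simpa only [energy_sub] using exists_flipAt_le_abs_energy_sub (θ - θ') hadj.ne hts' x

/-- Lemma (flipping lemma): with `Δ(x) = Σ_{(u,v)∈E} θ_{uv} x_u x_v −
Σ_{(u,v)∈E'} θ'_{uv} x_u x_v = energy θ x − energy θ' x`, for any edge
`(s,t) ∈ E \ E'` and configuration `x`, flipping `x_s`, `x_t`, or both yields a
configuration at which `Δ` has changed by at least `|θ_{st}|`. -/
theorem flipping_lemma (p : ℕ) (hp : 2 ≤ p)
    (G G' : SimpleGraph (Fin p)) (θ θ' : Fin p → Fin p → ℝ)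
    (hθsym : IsSymParam θ) (hθ'sym : IsSymParam θ')
    (hθsupp : ∀ u v : Fin p, ¬ G.Adj u v → θ u v = 0)
    (hθ'supp : ∀ u v : Fin p, ¬ G'.Adj u v → θ' u v = 0)
    (s t : Fin p) (hst : G.Adj s t ∧ ¬ G'.Adj s t)
    (x : Fin p → Bool) :
    ∃ x' : Fin p → Bool, (∀ u : Fin p, u ≠ s → u ≠ t → x' u = x u) ∧ x' ≠ x ∧
      |θ s t| ≤ |(energy θ x' - energy θ' x') - (energy θ x - energy θ' x)| :=
  flipping_lemma_general p G G' θ θ' hθsym hθ'supp s t hst x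
end
end
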